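/- arXiv:2103.11492 — 2 statements merged into one kernel-verified Lean document; each statement's English description precedes it below -/
import Mathlib

section
/- Let p be a prime number, m ≥ 1 an integer, and G a cyclic group of order p^m with a fixed generator σ. Let a be an integer coprime to p, so that σ' := σ^a is also a generator of G, and let ā denote the class of a in (ℤ/p^mℤ)^×. Then in the group ring (ℤ/p^mℤ)[G] one has Σ_{i=1}^{p^m − 1} ī·(σ')^i = ā^{-1} · Σ_{i=1}^{p^m − 1} ī·σ^i, where ī denotes the class of i in ℤ/p^mℤ. In other words, the Kolyvagin derivative operator taken with respect to the generator σ' equals, modulo p^m, the derivative taken with respect to σ multiplied by the unit ā^{-1}. -/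
/-- Let `p` be a prime, `m ≥ 1`, and `G` a cyclic group of order `p^m`
with generator `σ`.  Let `a` be an integer coprime to `p`, so `σ' = σ^a` is again a
generator.  In the group ring `(ℤ/p^mℤ)[G]` the Kolyvagin derivative with respect to
`σ'` equals the Kolyvagin derivative with respect to `σ` multiplied by the inverse of
the class of `a` modulo `p^m`. -/
theorem kolyvagin_derivative_generator_change
    (p m : ℕ) (hp : p.Prime) (hm : 1 ≤ m)
    (G : Type*) [Group G] (σ : G)
    (hcard : Nat.card G = p ^ m)
    (hgen : ∀ g : G, g ∈ Subgroup.zpowers σ)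
    (a : ℕ) (ha : Nat.Coprime a p) :
    (∑ i ∈ Finset.Icc 1 (p ^ m - 1),
        (i : ZMod (p ^ m)) • MonoidAlgebra.of (ZMod (p ^ m)) G ((σ ^ a) ^ i)) =
      ((a : ZMod (p ^ m))⁻¹) •
        ∑ i ∈ Finset.Icc 1 (p ^ m - 1),
          (i : ZMod (p ^ m)) • MonoidAlgebra.of (ZMod (p ^ m)) G (σ ^ i) := by
  set N := p ^ m with hN
  have hN1 : 1 < N := Nat.one_lt_pow (by omega) hp.one_lt
  haveI : NeZero N := ⟨by omega⟩
  have hfinG : Finite G := by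
    have : 0 < Nat.card G := by rw [hcard]; omega
    exact (Nat.card_pos_iff.mp this).2
  haveI : Fintype G := Fintype.ofFinite G
  have hord : orderOf σ = N := by
    rw [← hcard]
    exact orderOf_eq_card_of_forall_mem_zpowers hgen
  have hpow : ∀ k : ℕ, σ ^ k = σ ^ ((k : ZMod N).val) := by
    intro k
    rw [ZMod.val_natCast, ← hord, pow_mod_orderOf]
  have key : ∀ c : ℕ,
      (∑ i ∈ Finset.Icc 1 (N - 1),
          (i : ZMod N) • MonoidAlgebra.of (ZMod N) G (σ ^ (c * i)))
        = ∑ x : ZMod N,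
            x • MonoidAlgebra.of (ZMod N) G (σ ^ (((c : ZMod N) * x).val)) := by
    intro c
    have hsub : Finset.Icc 1 (N - 1) ⊆ Finset.range N := by
      intro i hi
      simp only [Finset.mem_Icc] at hi
      simp only [Finset.mem_range]
      omega
    rw [Finset.sum_subset hsub (by
      intro i hi hni
      simp only [Finset.mem_Icc] at hni
      simp only [Finset.mem_range] at hi
      have : i = 0 := by omega
      subst this
      rw [Nat.cast_zero, zero_smul])]
    refine Finset.sum_nbij' (fun i => (i : ZMod N)) (fun x => x.val) ?_ ?_ ?_ ?_ ?_
    · intro i _; exact Finset.mem_univ _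
    · intro x _; exact Finset.mem_range.mpr x.val_lt
    · intro i hi
      exact ZMod.val_cast_of_lt (Finset.mem_range.mp hi)
    · intro x _
      exact ZMod.natCast_rightInverse x
    · intro i _
      congr 1
      rw [hpow (c * i)]
      push_cast
      rfl
  have hcop : Nat.Coprime a N := ha.pow_right m
  have hu : IsUnit (a : ZMod N) := (ZMod.isUnit_iff_coprime a N).mpr hcop
  have hLHS : (∑ i ∈ Finset.Icc 1 (N - 1),
      (i : ZMod N) • MonoidAlgebra.of (ZMod N) G ((σ ^ a) ^ i))
      = ∑ x : ZMod N, x • MonoidAlgebra.of (ZMod N) G (σ ^ (((a : ZMod N) * x).val)) := by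
    rw [← key a]
    refine Finset.sum_congr rfl fun i _ => ?_
    rw [← pow_mul]
  rw [hLHS]
  have hRHS : (∑ i ∈ Finset.Icc 1 (N - 1),
      (i : ZMod N) • MonoidAlgebra.of (ZMod N) G (σ ^ i))
      = ∑ x : ZMod N, x • MonoidAlgebra.of (ZMod N) G (σ ^ x.val) := by
    rw [show (∑ i ∈ Finset.Icc 1 (N - 1),
        (i : ZMod N) • MonoidAlgebra.of (ZMod N) G (σ ^ i))
        = ∑ i ∈ Finset.Icc 1 (N - 1),
        (i : ZMod N) • MonoidAlgebra.of (ZMod N) G (σ ^ (1 * i)) by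
      refine Finset.sum_congr rfl fun i _ => ?_; rw [one_mul], key 1]
    refine Finset.sum_congr rfl fun x _ => ?_
    rw [Nat.cast_one, one_mul]
  rw [hRHS, Finset.smul_sum]
  have hbij : Function.Bijective (fun y : ZMod N => (a : ZMod N) * y) := by
    refine Function.bijective_iff_has_inverse.mpr
      ⟨fun y => (a : ZMod N)⁻¹ * y, fun y => ?_, fun y => ?_⟩
    · simp only [← mul_assoc, ZMod.inv_mul_of_unit _ hu, one_mul]
    · simp only [← mul_assoc, ZMod.mul_inv_of_unit _ hu, one_mul]
  refine Fintype.sum_bijective _ hbij _ _ fun x => ?_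
  rw [← mul_smul, ← mul_assoc, ZMod.inv_mul_of_unit _ hu, one_mul]
end

section
/- Let G be a group, K ⊆ G a subgroup of index 2, and τ ∈ G with τ ∉ K (so τ² ∈ K). Let L be a field, and let ψ, φ : K → L^× be group homomorphisms. Then the unique L-linear map Ψ : V_ψ ⊗_L V_φ → V_{ψφ} ⊕ V_{ψφ'} determined on basis vectors by Ψ(u_ψ ⊗ u_φ) = (u_{ψφ}, 0), Ψ(v_ψ ⊗ v_φ) = (v_{ψφ}, 0), Ψ(u_ψ ⊗ v_φ) = (0, u_{ψφ'}) and Ψ(v_ψ ⊗ u_φ) = (0, φ(τ²)^{-1}·v_{ψφ'}) is a G-equivariant L-linear isomorphism, where ψφ : K → L^×, k ↦ ψ(k)φ(k) and ψφ' : K → L^×, k ↦ ψ(k)φ(τkτ^{-1}). In particular, the tensor product of the representations induced from ψ and φ decomposes as the direct sum of the representation induced from ψφ and the representation induced from ψφ'. -/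
section IndRep

variable {G : Type*} [Group G] {K : Subgroup G} (L : Type*) [Field L]

/-- The representation of `G` induced from a character `ψ : K → Lˣ` of a subgroup `K`:
the space of functions `v : G → L` with `v (k * g) = ψ k * v g` for `k ∈ K`, `g ∈ G`. -/
def IndRep (ψ : K →* Lˣ) : Submodule L (G → L) where
  carrier := {v | ∀ (k : K) (g : G), v (↑k * g) = (ψ k : L) * v g}
  add_mem' {v w} hv hw := by
    intro k g
    simp only [Pi.add_apply, hv k g, hw k g, mul_add]
  zero_mem' := by intro k g; simp
  smul_mem' c v hv := by
    intro k g
    simp only [Pi.smul_apply, smul_eq_mul, hv k g, mul_left_comm]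

variable {L}

/-- The (right-translation) action of `g : G` on the induced representation,
`(g • v) (x) = v (x * g)`, as an `L`-linear map. -/
def indAct (ψ : K →* Lˣ) (g : G) : IndRep L ψ →ₗ[L] IndRep L ψ where
  toFun v := ⟨fun x => (v : G → L) (x * g), fun k x => by
    simpa [mul_assoc] using v.2 k (x * g)⟩
  map_add' v w := by ext x; simp
  map_smul' c v := by ext x; simp

open Classical in
/-- The function underlying the canonical element `u_ψ`: supported on `K`, where it is
given by `ψ`. -/
noncomputable def uFun (ψ : K →* Lˣ) : G → L :=
  fun g => if h : g ∈ K then (ψ ⟨g, h⟩ : L) else 0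

theorem uFun_mem (ψ : K →* Lˣ) : uFun ψ ∈ IndRep L ψ := by
  intro k g
  unfold uFun
  by_cases hg : g ∈ K
  · have hkg : (↑k * g) ∈ K := K.mul_mem k.2 hg
    rw [dif_pos hkg, dif_pos hg]
    have h1 : (⟨↑k * g, hkg⟩ : K) = k * ⟨g, hg⟩ := rfl
    rw [h1, map_mul, Units.val_mul]
  · have hkg : ¬(↑k * g) ∈ K := fun h => hg (by
      simpa using K.mul_mem (K.inv_mem k.2) h)
    rw [dif_neg hkg, dif_neg hg, mul_zero]

/-- The canonical element `u_ψ` of the induced representation, supported on `K`,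
with `u_ψ k = ψ k` for `k ∈ K`. -/
noncomputable def uElem (ψ : K →* Lˣ) : IndRep L ψ := ⟨uFun ψ, uFun_mem ψ⟩

/-- The element `v_ψ := τ • u_ψ` of the induced representation. -/
noncomputable def vElem (ψ : K →* Lˣ) (τ : G) : IndRep L ψ := indAct ψ τ (uElem ψ)

/-- An index-two subgroup is normal: conjugates of its elements stay in it. -/
theorem conj_mem_of_index_two (hK : K.index = 2) (τ : G) {x : G} (hx : x ∈ K) :
    τ * x * τ⁻¹ ∈ K := by
  rw [Subgroup.mul_mem_iff_of_index_two hK, Subgroup.mul_mem_iff_of_index_two hK]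
  simp [hx, K.inv_mem_iff]

/-- Conjugation by `τ` as a homomorphism of an index-two subgroup. -/
def conjHom (hK : K.index = 2) (τ : G) : K →* K where
  toFun k := ⟨τ * ↑k * τ⁻¹, conj_mem_of_index_two hK τ k.2⟩
  map_one' := Subtype.ext (by simp)
  map_mul' a b := Subtype.ext (by simp only [Subgroup.coe_mul]; group)

/-- The conjugate character `ψ' : k ↦ ψ (τ k τ⁻¹)` of a character of an
index-two subgroup. -/
def conjChar (ψ : K →* Lˣ) (hK : K.index = 2) (τ : G) : K →* Lˣ :=
  ψ.comp (conjHom hK τ)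

end IndRep

open TensorProduct

section Stmt3

variable {G : Type*} [Group G] {K : Subgroup G} {L : Type*} [Field L]

/-- The conditions prescribing the values of
`Ψ : V_ψ ⊗ V_φ → V_{ψφ} ⊕ V_{ψφ'}` on the basis vectors
`u_ψ ⊗ u_φ`, `v_ψ ⊗ v_φ`, `u_ψ ⊗ v_φ`, `v_ψ ⊗ u_φ`. -/
noncomputable def PsiConds (hK : K.index = 2) (τ : G) (ψ φ : K →* Lˣ)
    (Ψ : (IndRep L ψ ⊗[L] IndRep L φ) →ₗ[L]
      (IndRep L (ψ * φ) × IndRep L (ψ * conjChar φ hK τ))) : Prop :=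
  Ψ (uElem ψ ⊗ₜ uElem φ) = (uElem (ψ * φ), 0) ∧
  Ψ (vElem ψ τ ⊗ₜ vElem φ τ) = (vElem (ψ * φ) τ, 0) ∧
  Ψ (uElem ψ ⊗ₜ vElem φ τ) = (0, uElem (ψ * conjChar φ hK τ)) ∧
  Ψ (vElem ψ τ ⊗ₜ uElem φ) =
    (0, (((φ ⟨τ * τ, Subgroup.mul_self_mem_of_index_two hK τ⟩ : Lˣ) : L))⁻¹ •
      vElem (ψ * conjChar φ hK τ) τ)

end Stmt3

section ProofAux

variable {G : Type*} [Group G] {K : Subgroup G} {L : Type*} [Field L]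

theorem uFun_mem_eq (ψ : K →* Lˣ) {g : G} (hg : g ∈ K) :
    uFun (L := L) ψ g = ψ ⟨g, hg⟩ := dif_pos hg

theorem uFun_notmem_eq (ψ : K →* Lˣ) {g : G} (hg : g ∉ K) :
    uFun (L := L) ψ g = 0 := dif_neg hg

theorem uElem_coe (ψ : K →* Lˣ) (x : G) :
    ((uElem ψ : IndRep L ψ) : G → L) x = uFun ψ x := rfl

theorem vElem_coe (ψ : K →* Lˣ) (τ : G) (x : G) :
    ((vElem ψ τ : IndRep L ψ) : G → L) x = uFun ψ (x * τ) := rfl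

theorem indAct_coe (ψ : K →* Lˣ) (g : G) (v : IndRep L ψ) (x : G) :
    ((indAct ψ g v : IndRep L ψ) : G → L) x = (v : G → L) (x * g) := rfl

theorem indAct_mul (ψ : K →* Lˣ) (g h : G) :
    indAct (L := L) ψ (g * h) = indAct ψ g ∘ₗ indAct ψ h := by
  refine LinearMap.ext fun v => Subtype.ext (funext fun x => ?_)
  show (v : G → L) (x * (g * h)) = (v : G → L) (x * g * h)
  rw [mul_assoc]

theorem act_u (ψ : K →* Lˣ) (k : K) :
    indAct ψ (k : G) (uElem ψ) = ((ψ k : Lˣ) : L) • uElem ψ := by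
  refine Subtype.ext (funext fun x => ?_)
  show uFun ψ (x * (k : G)) = ((ψ k : Lˣ) : L) * uFun ψ x
  by_cases hx : x ∈ K
  · have h1 : x * (k : G) ∈ K := K.mul_mem hx k.2
    rw [uFun_mem_eq ψ h1, uFun_mem_eq ψ hx]
    have h2 : (⟨x * (k : G), h1⟩ : K) = ⟨x, hx⟩ * k := rfl
    rw [h2, map_mul, Units.val_mul, mul_comm]
  · have h1 : x * (k : G) ∉ K := fun h => hx (by
      simpa using K.mul_mem h (K.inv_mem k.2))
    rw [uFun_notmem_eq ψ h1, uFun_notmem_eq ψ hx, mul_zero]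

theorem psi_conj (ψ : K →* Lˣ) {a x : G} (ha : a ∈ K) (hx : x ∈ K)
    (h2 : a * x * a⁻¹ ∈ K) : ψ ⟨a * x * a⁻¹, h2⟩ = ψ ⟨x, hx⟩ := by
  have h3 : (⟨a * x * a⁻¹, h2⟩ : K) = ⟨a, ha⟩ * ⟨x, hx⟩ * (⟨a, ha⟩ : K)⁻¹ := rfl
  rw [h3, map_mul, map_mul, map_inv, mul_comm (ψ ⟨a, ha⟩), mul_inv_cancel_right]

theorem conjHom_coe (hK : K.index = 2) (τ : G) (k : K) :
    ((conjHom hK τ k : K) : G) = τ * (k : G) * τ⁻¹ := rfl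

theorem act_u_tau (ψ : K →* Lˣ) (τ : G) :
    indAct ψ τ (uElem ψ) = vElem ψ τ := rfl

theorem act_v (ψ : K →* Lˣ) (hK : K.index = 2) (τ : G) (k : K) :
    indAct ψ (k : G) (vElem ψ τ) = ((ψ (conjHom hK τ k) : Lˣ) : L) • vElem ψ τ := by
  have hk' : τ⁻¹ * (k : G) * τ ∈ K := by
    simpa using conj_mem_of_index_two hK τ⁻¹ k.2
  have h1 : (k : G) * τ = τ * (τ⁻¹ * (k : G) * τ) := by group
  have h2 : vElem ψ τ = indAct ψ τ (uElem ψ) := rfl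
  rw [h2, ← LinearMap.comp_apply, ← indAct_mul, h1, indAct_mul, LinearMap.comp_apply,
    act_u ψ ⟨_, hk'⟩, map_smul]
  have h3 : ψ ⟨τ⁻¹ * (k : G) * τ, hk'⟩ = ψ (conjHom hK τ k) := by
    have h4 : (conjHom hK τ k : K) =
        ⟨(τ * τ) * (τ⁻¹ * (k : G) * τ) * (τ * τ)⁻¹,
          by rw [show (τ * τ) * (τ⁻¹ * (k : G) * τ) * (τ * τ)⁻¹ = τ * (k : G) * τ⁻¹ by group]
             exact conj_mem_of_index_two hK τ k.2⟩ := by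
      apply Subtype.ext
      show τ * (k : G) * τ⁻¹ = _
      group
    rw [h4, psi_conj ψ (Subgroup.mul_self_mem_of_index_two hK τ) hk']
  rw [h3]

theorem act_v_tau (ψ : K →* Lˣ) (hK : K.index = 2) (τ : G) :
    indAct ψ τ (vElem ψ τ) =
      ((ψ ⟨τ * τ, Subgroup.mul_self_mem_of_index_two hK τ⟩ : Lˣ) : L) • uElem ψ := by
  have h1 : indAct ψ τ (vElem ψ τ) = indAct ψ (τ * τ) (uElem ψ) := by
    rw [indAct_mul]; rfl
  rw [h1]
  exact act_u ψ ⟨τ * τ, Subgroup.mul_self_mem_of_index_two hK τ⟩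

end ProofAux

section BasisAux

variable {G : Type*} [Group G] {K : Subgroup G} {L : Type*} [Field L]

theorem uFun_one (ψ : K →* Lˣ) : uFun (L := L) ψ (1 : G) = 1 := by
  rw [uFun_mem_eq ψ K.one_mem]
  have : (⟨(1 : G), K.one_mem⟩ : K) = 1 := rfl
  rw [this, map_one, Units.val_one]

/-- The coordinate linear equivalence of the induced representation with `Bool → L`. -/
noncomputable def indEquiv (ψ : K →* Lˣ) (hK : K.index = 2) (τ : G) (hτ : τ ∉ K) :
    IndRep L ψ ≃ₗ[L] (Bool → L) := by
  set c : L := ((ψ ⟨τ * τ, Subgroup.mul_self_mem_of_index_two hK τ⟩ : Lˣ) : L) with hc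
  have hc0 : c ≠ 0 := Units.ne_zero _
  refine LinearEquiv.ofLinear
    { toFun := fun v => fun b => if b then c⁻¹ * (v : G → L) τ else (v : G → L) 1
      map_add' := fun v w => by funext b; by_cases hb : b <;> simp [hb, mul_add]
      map_smul' := fun r v => by funext b; by_cases hb : b <;> simp [hb] <;> ring }
    { toFun := fun f => f false • uElem ψ + f true • vElem ψ τ
      map_add' := fun f g => by
        simp only [Pi.add_apply, add_smul]; abel
      map_smul' := fun r f => by
        simp only [Pi.smul_apply, smul_eq_mul, RingHom.id_apply, smul_add, smul_smul] }
    ?_ ?_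
  · refine LinearMap.ext fun f => funext fun b => ?_
    cases b
    · show f false * uFun ψ (1 : G) + f true * uFun ψ ((1 : G) * τ) = f false
      rw [one_mul, uFun_one, uFun_notmem_eq ψ hτ]
      ring
    · show c⁻¹ * (f false * uFun ψ τ + f true * uFun ψ (τ * τ)) = f true
      rw [uFun_notmem_eq ψ hτ, uFun_mem_eq ψ (Subgroup.mul_self_mem_of_index_two hK τ), ← hc,
        mul_zero, zero_add, mul_comm (f true), ← mul_assoc, inv_mul_cancel₀ hc0, one_mul]
  · refine LinearMap.ext fun v => Subtype.ext (funext fun g => ?_)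
    have e1 : (((((v : G → L) 1) • uElem ψ + (c⁻¹ * (v : G → L) τ) • vElem ψ τ :
        IndRep L ψ)) : G → L) g =
        (v : G → L) 1 * uFun ψ g + (c⁻¹ * (v : G → L) τ) * uFun ψ (g * τ) := rfl
    show (v : G → L) 1 * uFun ψ g + (c⁻¹ * (v : G → L) τ) * uFun ψ (g * τ) = (v : G → L) g
    by_cases hg : g ∈ K
    · have h2 : g * τ ∉ K := fun h => hτ (by simpa using K.mul_mem (K.inv_mem hg) h)
      rw [uFun_mem_eq ψ hg, uFun_notmem_eq ψ h2]
      have h3 := v.2 ⟨g, hg⟩ 1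
      rw [mul_one] at h3
      rw [h3]; ring
    · have hk0 : g * τ⁻¹ ∈ K := by
        rw [Subgroup.mul_mem_iff_of_index_two hK]
        exact iff_of_false hg (fun h => hτ (by simpa using K.inv_mem h))
      have hgτ : g * τ ∈ K := by
        rw [show g * τ = (g * τ⁻¹) * (τ * τ) by group]
        exact K.mul_mem hk0 (Subgroup.mul_self_mem_of_index_two hK τ)
      rw [uFun_notmem_eq ψ hg, uFun_mem_eq ψ hgτ]
      have h4 : (⟨g * τ, hgτ⟩ : K) =
          ⟨g * τ⁻¹, hk0⟩ * ⟨τ * τ, Subgroup.mul_self_mem_of_index_two hK τ⟩ := by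
        apply Subtype.ext; show g * τ = (g * τ⁻¹) * (τ * τ); group
      have h5 := v.2 ⟨g * τ⁻¹, hk0⟩ τ
      rw [show ((⟨g * τ⁻¹, hk0⟩ : K) : G) * τ = g by group] at h5
      rw [h4, map_mul, Units.val_mul, h5, ← hc]
      field_simp
      ring

/-- The basis `{u_ψ, v_ψ}` of the induced representation. -/
noncomputable def indBasis (ψ : K →* Lˣ) (hK : K.index = 2) (τ : G) (hτ : τ ∉ K) :
    Module.Basis Bool L (IndRep L ψ) := Module.Basis.ofEquivFun (indEquiv ψ hK τ hτ)

theorem indBasis_false (ψ : K →* Lˣ) (hK : K.index = 2) (τ : G) (hτ : τ ∉ K) :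
    indBasis ψ hK τ hτ false = uElem ψ := by
  classical
  rw [indBasis, Module.Basis.coe_ofEquivFun]
  rw [LinearEquiv.symm_apply_eq]
  funext b
  have : (indEquiv ψ hK τ hτ) (uElem ψ) b =
      if b then (((ψ ⟨τ * τ, Subgroup.mul_self_mem_of_index_two hK τ⟩ : Lˣ) : L))⁻¹ *
        uFun ψ τ else uFun ψ 1 := rfl
  rw [this]
  by_cases hb : b <;>
    simp [hb, uFun_one, uFun_notmem_eq ψ hτ, Pi.single_apply]

theorem indBasis_true (ψ : K →* Lˣ) (hK : K.index = 2) (τ : G) (hτ : τ ∉ K) :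
    indBasis ψ hK τ hτ true = vElem ψ τ := by
  classical
  rw [indBasis, Module.Basis.coe_ofEquivFun]
  rw [LinearEquiv.symm_apply_eq]
  funext b
  have : (indEquiv ψ hK τ hτ) (vElem ψ τ) b =
      if b then (((ψ ⟨τ * τ, Subgroup.mul_self_mem_of_index_two hK τ⟩ : Lˣ) : L))⁻¹ *
        uFun ψ (τ * τ) else uFun ψ (1 * τ) := rfl
  rw [this]
  by_cases hb : b <;>
    simp [hb, one_mul, uFun_notmem_eq ψ hτ,
      uFun_mem_eq ψ (Subgroup.mul_self_mem_of_index_two hK τ), Pi.single_apply]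

end BasisAux

section MoreAux

variable {G : Type*} [Group G] {K : Subgroup G} {L : Type*} [Field L]

theorem conjChar_apply (φ : K →* Lˣ) (hK : K.index = 2) (τ : G) (k : K) :
    conjChar φ hK τ k = φ (conjHom hK τ k) := rfl

theorem conjHom_tau_sq (hK : K.index = 2) (τ : G) :
    conjHom hK τ ⟨τ * τ, Subgroup.mul_self_mem_of_index_two hK τ⟩ =
      ⟨τ * τ, Subgroup.mul_self_mem_of_index_two hK τ⟩ := by
  apply Subtype.ext; show τ * (τ * τ) * τ⁻¹ = τ * τ; group

theorem conjChar_conjHom (φ : K →* Lˣ) (hK : K.index = 2) (τ : G) (k : K) :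
    φ (conjHom hK τ (conjHom hK τ k)) = φ k := by
  have hττ := Subgroup.mul_self_mem_of_index_two hK τ
  have hmem : (τ * τ) * (k : G) * (τ * τ)⁻¹ ∈ K := by
    rw [show (τ * τ) * (k : G) * (τ * τ)⁻¹ = τ * (τ * (k : G) * τ⁻¹) * τ⁻¹ by group]
    exact conj_mem_of_index_two hK τ (conj_mem_of_index_two hK τ k.2)
  have h1 : conjHom hK τ (conjHom hK τ k) = ⟨(τ * τ) * (k : G) * (τ * τ)⁻¹, hmem⟩ := by
    apply Subtype.ext; show τ * (τ * (k : G) * τ⁻¹) * τ⁻¹ = _; group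
  rw [h1, psi_conj φ hττ k.2 hmem]

/-- The prescribed values of `Ψ` on the tensor-product basis. -/
noncomputable def psiTarget (hK : K.index = 2) (τ : G) (ψ φ : K →* Lˣ) :
    Bool × Bool → IndRep L (ψ * φ) × IndRep L (ψ * conjChar φ hK τ)
  | (false, false) => (uElem (ψ * φ), 0)
  | (true, true) => (vElem (ψ * φ) τ, 0)
  | (false, true) => (0, uElem (ψ * conjChar φ hK τ))
  | (true, false) => (0, (((φ ⟨τ * τ, Subgroup.mul_self_mem_of_index_two hK τ⟩ : Lˣ) : L))⁻¹ •
      vElem (ψ * conjChar φ hK τ) τ)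

/-- The prescribed values of the inverse map on the product basis. -/
noncomputable def phiTarget (hK : K.index = 2) (τ : G) (ψ φ : K →* Lˣ) :
    Bool ⊕ Bool → IndRep L ψ ⊗[L] IndRep L φ
  | Sum.inl false => uElem ψ ⊗ₜ uElem φ
  | Sum.inl true => vElem ψ τ ⊗ₜ vElem φ τ
  | Sum.inr false => uElem ψ ⊗ₜ vElem φ τ
  | Sum.inr true => ((φ ⟨τ * τ, Subgroup.mul_self_mem_of_index_two hK τ⟩ : Lˣ) : L) •
      (vElem ψ τ ⊗ₜ uElem φ)

end MoreAux
set_option maxHeartbeats 1000000 in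
/-- Let `K ⊆ G` have index two, `τ ∉ K`, `L` a field, and
`ψ, φ : K → Lˣ` characters.  The unique `L`-linear map
`Ψ : V_ψ ⊗ V_φ → V_{ψφ} ⊕ V_{ψφ'}` determined on basis vectors by
`u_ψ ⊗ u_φ ↦ (u_{ψφ}, 0)`, `v_ψ ⊗ v_φ ↦ (v_{ψφ}, 0)`, `u_ψ ⊗ v_φ ↦ (0, u_{ψφ'})` and
`v_ψ ⊗ u_φ ↦ (0, φ(τ²)⁻¹ • v_{ψφ'})` is a `G`-equivariant `L`-linear isomorphism;
here `ψφ` is the product character and `ψφ'(k) = ψ(k)·φ(τkτ⁻¹)`.  In particular the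
tensor product of induced representations `V_ψ ⊗ V_φ` decomposes as
`V_{ψφ} ⊕ V_{ψφ'}`. -/
theorem induced_rep_tensor_decomposition
    (G : Type*) [Group G] (K : Subgroup G) (hK : K.index = 2)
    (τ : G) (hτ : τ ∉ K) (L : Type*) [Field L] (ψ φ : K →* Lˣ) :
    (∃! Ψ : (IndRep L ψ ⊗[L] IndRep L φ) →ₗ[L]
        (IndRep L (ψ * φ) × IndRep L (ψ * conjChar φ hK τ)),
      PsiConds hK τ ψ φ Ψ) ∧
    ∀ Ψ : (IndRep L ψ ⊗[L] IndRep L φ) →ₗ[L]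
        (IndRep L (ψ * φ) × IndRep L (ψ * conjChar φ hK τ)),
      PsiConds hK τ ψ φ Ψ →
        Function.Bijective Ψ ∧
        ∀ g : G,
          Ψ ∘ₗ TensorProduct.map (indAct ψ g) (indAct φ g) =
            (LinearMap.prodMap (indAct (ψ * φ) g)
              (indAct (ψ * conjChar φ hK τ) g)) ∘ₗ Ψ := by
  classical
  have hc0 : ((φ ⟨τ * τ, Subgroup.mul_self_mem_of_index_two hK τ⟩ : Lˣ) : L) ≠ 0 :=
    Units.ne_zero _
  set bψ := indBasis ψ hK τ hτ with hbψdef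
  set bφ := indBasis φ hK τ hτ with hbφdef
  set b1 := indBasis (ψ * φ) hK τ hτ with hb1def
  set b2 := indBasis (ψ * conjChar φ hK τ) hK τ hτ with hb2def
  set bT := bψ.tensorProduct bφ with hbTdef
  set bP := b1.prod b2 with hbPdef
  have eψf : bψ false = uElem ψ := indBasis_false ψ hK τ hτ
  have eψt : bψ true = vElem ψ τ := indBasis_true ψ hK τ hτ
  have eφf : bφ false = uElem φ := indBasis_false φ hK τ hτ
  have eφt : bφ true = vElem φ τ := indBasis_true φ hK τ hτ
  have e1f : b1 false = uElem (ψ * φ) := indBasis_false _ hK τ hτ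
  have e1t : b1 true = vElem (ψ * φ) τ := indBasis_true _ hK τ hτ
  have e2f : b2 false = uElem (ψ * conjChar φ hK τ) := indBasis_false _ hK τ hτ
  have e2t : b2 true = vElem (ψ * conjChar φ hK τ) τ := indBasis_true _ hK τ hτ
  have eT : ∀ i j : Bool, bT (i, j) = bψ i ⊗ₜ[L] bφ j := fun i j =>
    Module.Basis.tensorProduct_apply bψ bφ i j
  have ePl : ∀ i : Bool, bP (Sum.inl i) = (b1 i, 0) := fun i => by
    simp [hbPdef, Module.Basis.prod_apply]
  have ePr : ∀ i : Bool, bP (Sum.inr i) = (0, b2 i) := fun i => by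
    simp [hbPdef, Module.Basis.prod_apply]
  -- the reformulation of `PsiConds` in terms of the basis `bT`
  have key : ∀ Ψ : (IndRep L ψ ⊗[L] IndRep L φ) →ₗ[L]
      (IndRep L (ψ * φ) × IndRep L (ψ * conjChar φ hK τ)),
      PsiConds hK τ ψ φ Ψ ↔ ∀ p : Bool × Bool, Ψ (bT p) = psiTarget hK τ ψ φ p := by
    intro Ψ
    constructor
    · rintro ⟨h1, h2, h3, h4⟩ ⟨i, j⟩
      cases i <;> cases j <;>
        simp only [eT, eψf, eψt, eφf, eφt, psiTarget] <;> assumption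
    · intro h
      refine ⟨?_, ?_, ?_, ?_⟩
      · have := h (false, false); rwa [eT, eψf, eφf] at this
      · have := h (true, true); rwa [eT, eψt, eφt] at this
      · have := h (false, true); rwa [eT, eψf, eφt] at this
      · have := h (true, false); rwa [eT, eψt, eφf] at this
  constructor
  · -- existence and uniqueness
    refine ⟨bT.constr L (psiTarget hK τ ψ φ), ?_, ?_⟩
    · exact (key _).2 fun p => bT.constr_basis L (psiTarget hK τ ψ φ) p
    · intro Ψ hΨ
      refine bT.ext fun p => ?_
      rw [(key Ψ).1 hΨ p, bT.constr_basis L (psiTarget hK τ ψ φ) p]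
  · -- bijectivity and equivariance
    intro Ψ hΨ
    obtain ⟨h1, h2, h3, h4⟩ := hΨ
    constructor
    · -- bijectivity
      set Φ := bP.constr L (phiTarget hK τ ψ φ) with hΦdef
      have hΦl : ∀ s, Φ (bP s) = phiTarget hK τ ψ φ s := fun s =>
        bP.constr_basis L (phiTarget hK τ ψ φ) s
      have hcomp1 : Φ ∘ₗ Ψ = LinearMap.id := by
        refine bT.ext fun p => ?_
        rcases p with ⟨i, j⟩
        rw [LinearMap.comp_apply, LinearMap.id_apply, eT]
        cases i <;> cases j
        · rw [eψf, eφf, h1, show (uElem (ψ * φ), (0 : IndRep L (ψ * conjChar φ hK τ))) =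
            bP (Sum.inl false) by rw [ePl, e1f], hΦl]
          rfl
        · rw [eψf, eφt, h3, show ((0 : IndRep L (ψ * φ)), uElem (ψ * conjChar φ hK τ)) =
            bP (Sum.inr false) by rw [ePr, e2f], hΦl]
          rfl
        · rw [eψt, eφf, h4, show ((0 : IndRep L (ψ * φ)),
              (((φ ⟨τ * τ, Subgroup.mul_self_mem_of_index_two hK τ⟩ : Lˣ) : L))⁻¹ •
                vElem (ψ * conjChar φ hK τ) τ) =
              (((φ ⟨τ * τ, Subgroup.mul_self_mem_of_index_two hK τ⟩ : Lˣ) : L))⁻¹ •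
                bP (Sum.inr true) by rw [ePr, e2t, Prod.smul_mk, smul_zero], map_smul, hΦl]
          show _ • (((φ ⟨τ * τ, _⟩ : Lˣ) : L) • (vElem ψ τ ⊗ₜ[L] uElem φ)) = _
          rw [smul_smul, inv_mul_cancel₀ hc0, one_smul]
        · rw [eψt, eφt, h2, show (vElem (ψ * φ) τ, (0 : IndRep L (ψ * conjChar φ hK τ))) =
            bP (Sum.inl true) by rw [ePl, e1t], hΦl]
          rfl
      have hcomp2 : Ψ ∘ₗ Φ = LinearMap.id := by
        refine bP.ext fun s => ?_
        rw [LinearMap.comp_apply, LinearMap.id_apply, hΦl]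
        rcases s with (i | i) <;> cases i
        · show Ψ (uElem ψ ⊗ₜ[L] uElem φ) = _
          rw [h1, ePl, e1f]
        · show Ψ (vElem ψ τ ⊗ₜ[L] vElem φ τ) = _
          rw [h2, ePl, e1t]
        · show Ψ (uElem ψ ⊗ₜ[L] vElem φ τ) = _
          rw [h3, ePr, e2f]
        · show Ψ (((φ ⟨τ * τ, Subgroup.mul_self_mem_of_index_two hK τ⟩ : Lˣ) : L) •
            (vElem ψ τ ⊗ₜ[L] uElem φ)) = _
          rw [map_smul, h4, ePr, e2t, Prod.smul_mk, smul_zero, smul_smul,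
            mul_inv_cancel₀ hc0, one_smul]
      have hli : Function.LeftInverse Φ Ψ := fun x => by
        rw [← LinearMap.comp_apply, hcomp1, LinearMap.id_apply]
      have hri : Function.RightInverse Φ Ψ := fun y => by
        rw [← LinearMap.comp_apply, hcomp2, LinearMap.id_apply]
      exact ⟨hli.injective, hri.surjective⟩
    · -- equivariance
      have hmul : ∀ a b : G,
          (Ψ ∘ₗ TensorProduct.map (indAct ψ a) (indAct φ a) =
            (LinearMap.prodMap (indAct (ψ * φ) a) (indAct (ψ * conjChar φ hK τ) a)) ∘ₗ Ψ) →
          (Ψ ∘ₗ TensorProduct.map (indAct ψ b) (indAct φ b) =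
            (LinearMap.prodMap (indAct (ψ * φ) b) (indAct (ψ * conjChar φ hK τ) b)) ∘ₗ Ψ) →
          Ψ ∘ₗ TensorProduct.map (indAct ψ (a * b)) (indAct φ (a * b)) =
            (LinearMap.prodMap (indAct (ψ * φ) (a * b))
              (indAct (ψ * conjChar φ hK τ) (a * b))) ∘ₗ Ψ := by
        intro a b ha hb
        rw [indAct_mul, indAct_mul, indAct_mul, indAct_mul, TensorProduct.map_comp,
          ← LinearMap.prodMap_comp, ← LinearMap.comp_assoc, ha, LinearMap.comp_assoc, hb,
          ← LinearMap.comp_assoc]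
      have hPk : ∀ k : K,
          Ψ ∘ₗ TensorProduct.map (indAct ψ (k : G)) (indAct φ (k : G)) =
            (LinearMap.prodMap (indAct (ψ * φ) (k : G))
              (indAct (ψ * conjChar φ hK τ) (k : G))) ∘ₗ Ψ := by
        intro k
        refine bT.ext fun p => ?_
        rcases p with ⟨i, j⟩
        rw [LinearMap.comp_apply, LinearMap.comp_apply, eT, TensorProduct.map_tmul]
        cases i <;> cases j
        · rw [eψf, eφf, act_u ψ k, act_u φ k, tmul_smul, ← TensorProduct.smul_tmul',
            map_smul, map_smul, h1, LinearMap.prodMap_apply]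
          refine Prod.ext ?_ ?_
          · simp [act_u (ψ * φ) k, smul_smul, MonoidHom.mul_apply, Units.val_mul, mul_comm]
          · simp
        · rw [eψf, eφt, act_u ψ k, act_v φ hK τ k, tmul_smul, ← TensorProduct.smul_tmul',
            map_smul, map_smul, h3, LinearMap.prodMap_apply]
          refine Prod.ext ?_ ?_
          · simp
          · simp [act_u (ψ * conjChar φ hK τ) k, smul_smul, MonoidHom.mul_apply,
              Units.val_mul, conjChar_apply, mul_comm]
        · rw [eψt, eφf, act_v ψ hK τ k, act_u φ k, tmul_smul, ← TensorProduct.smul_tmul',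
            map_smul, map_smul, h4, LinearMap.prodMap_apply]
          refine Prod.ext ?_ ?_
          · simp
          · simp [act_v (ψ * conjChar φ hK τ) hK τ k, smul_smul, MonoidHom.mul_apply,
              Units.val_mul, conjChar_apply, conjChar_conjHom,
              mul_comm, mul_left_comm, mul_assoc]
        · rw [eψt, eφt, act_v ψ hK τ k, act_v φ hK τ k, tmul_smul, ← TensorProduct.smul_tmul',
            map_smul, map_smul, h2, LinearMap.prodMap_apply]
          refine Prod.ext ?_ ?_
          · simp [act_v (ψ * φ) hK τ k, smul_smul, MonoidHom.mul_apply,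
              Units.val_mul, conjChar_apply, mul_comm]
          · simp
      have hPτ : Ψ ∘ₗ TensorProduct.map (indAct ψ τ) (indAct φ τ) =
            (LinearMap.prodMap (indAct (ψ * φ) τ)
              (indAct (ψ * conjChar φ hK τ) τ)) ∘ₗ Ψ := by
        refine bT.ext fun p => ?_
        rcases p with ⟨i, j⟩
        rw [LinearMap.comp_apply, LinearMap.comp_apply, eT, TensorProduct.map_tmul]
        cases i <;> cases j
        · rw [eψf, eφf, act_u_tau ψ τ, act_u_tau φ τ, h2, h1, LinearMap.prodMap_apply]
          refine Prod.ext ?_ ?_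
          · simp [act_u_tau]
          · simp
        · rw [eψf, eφt, act_u_tau ψ τ, act_v_tau φ hK τ, tmul_smul, map_smul, h4, h3,
            LinearMap.prodMap_apply]
          refine Prod.ext ?_ ?_
          · simp
          · simp [act_u_tau, smul_smul, mul_inv_cancel₀ hc0]
        · rw [eψt, eφf, act_v_tau ψ hK τ, act_u_tau φ τ, ← TensorProduct.smul_tmul',
            map_smul, h3, h4, LinearMap.prodMap_apply]
          refine Prod.ext ?_ ?_
          · simp
          · simp only [Prod.smul_snd, Prod.snd, map_smul,
              act_v_tau (ψ * conjChar φ hK τ) hK τ, smul_smul, MonoidHom.mul_apply,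
              Units.val_mul, conjChar_apply, conjHom_tau_sq]
            congr 1
            field_simp
        · rw [eψt, eφt, act_v_tau ψ hK τ, act_v_tau φ hK τ, tmul_smul,
            ← TensorProduct.smul_tmul', map_smul, map_smul, h1, h2,
            LinearMap.prodMap_apply]
          refine Prod.ext ?_ ?_
          · simp [act_v_tau (ψ * φ) hK τ, smul_smul, MonoidHom.mul_apply,
              Units.val_mul, mul_comm]
          · simp
      intro g
      by_cases hg : g ∈ K
      · exact hPk ⟨g, hg⟩
      · have hk0 : g * τ⁻¹ ∈ K := by
          rw [Subgroup.mul_mem_iff_of_index_two hK]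
          exact iff_of_false hg (fun h => hτ (by simpa using K.inv_mem h))
        have := hmul _ _ (hPk ⟨g * τ⁻¹, hk0⟩) hPτ
        rw [show ((⟨g * τ⁻¹, hk0⟩ : K) : G) * τ = g from by group] at this
        exact this
end
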